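/- Let φ be a limiting Carleman weight and suppose ψ is smooth real-valued satisfying |ψ'(x)|² = |φ'(x)|² on the level hypersurface G = φ^{−1}(C₀), and the transport equation φ'(x)·∂_x ψ(x) = 0 with ψ|_G prescribed. Then |ψ'(x)|² − |φ'(x)|² = 0 everywhere along the integral curves of φ'·∂_x through G, i.e., ψ solves the full eikonal system |ψ'|² = |φ'|², φ'·ψ' = 0. -/

import Mathlib

open scoped RealInnerProductSpace
noncomputable abbrev Euc (n : ℕ) := EuclideanSpace ℝ (Fin n)

noncomputable def poisson {n : ℕ} (a b : Euc n → Euc n → ℝ) (x ξ : Euc n) : ℝ :=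
  ⟪gradient (a x) ξ, gradient (fun y => b y ξ) x⟫ -
    ⟪gradient (fun y => a y ξ) x, gradient (b x) ξ⟫

noncomputable def symA {n : ℕ} (φ : Euc n → ℝ) (x ξ : Euc n) : ℝ :=
  ⟪ξ, ξ⟫ - ⟪gradient φ x, gradient φ x⟫

noncomputable def symB {n : ℕ} (φ : Euc n → ℝ) (x ξ : Euc n) : ℝ :=
  2 * ⟪gradient φ x, ξ⟫

variable {n : ℕ}

lemma inner_grad (f : Euc n → ℝ) (x v : Euc n) : ⟪gradient f x, v⟫ = fderiv ℝ f x v := by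
  rw [gradient]; exact InnerProductSpace.toDual_symm_apply

noncomputable def hess (f : Euc n → ℝ) (x : Euc n) : Euc n →L[ℝ] Euc n :=
  LinearMap.mkContinuous
    { toFun := fun v => (InnerProductSpace.toDual ℝ (Euc n)).symm (fderiv ℝ (fderiv ℝ f) x v)
      map_add' := fun v w => by simp [map_add]
      map_smul' := fun c v => by simp }
    ‖fderiv ℝ (fderiv ℝ f) x‖
    (fun v => by
      rw [LinearMap.coe_mk, AddHom.coe_mk, LinearIsometryEquiv.norm_map]
      exact (fderiv ℝ (fderiv ℝ f) x).le_opNorm v)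

lemma hess_apply (f : Euc n → ℝ) (x v : Euc n) :
    hess f x v = (InnerProductSpace.toDual ℝ (Euc n)).symm (fderiv ℝ (fderiv ℝ f) x v) := rfl

lemma inner_hess (f : Euc n → ℝ) (x v w : Euc n) :
    ⟪hess f x v, w⟫ = fderiv ℝ (fderiv ℝ f) x v w := by
  rw [hess_apply]; exact InnerProductSpace.toDual_symm_apply

lemma hess_symm {f : Euc n → ℝ} {x : Euc n} (hf : ContDiffAt ℝ 2 f x) (v w : Euc n) :
    ⟪hess f x v, w⟫ = ⟪hess f x w, v⟫ := by
  rw [inner_hess, inner_hess]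
  exact (hf.isSymmSndFDerivAt (by simp)) v w

lemma hasFDerivAt_grad {f : Euc n → ℝ} {x : Euc n} (hf : ContDiffAt ℝ 2 f x) :
    HasFDerivAt (gradient f) (hess f x) x := by
  have hF : HasFDerivAt (fderiv ℝ f) (fderiv ℝ (fderiv ℝ f) x) x :=
    ((hf.fderiv_right (m := 1) (by norm_num)).differentiableAt (by norm_num)).hasFDerivAt
  rw [hasFDerivAt_iff_isLittleO_nhds_zero] at hF ⊢
  refine Asymptotics.isLittleO_iff.2 fun c hc => ?_
  filter_upwards [Asymptotics.isLittleO_iff.1 hF hc] with y hy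
  have : ‖gradient f (x + y) - gradient f x - hess f x y‖
      = ‖fderiv ℝ f (x + y) - fderiv ℝ f x - fderiv ℝ (fderiv ℝ f) x y‖ := by
    rw [gradient, gradient, hess_apply, ← map_sub, ← map_sub, LinearIsometryEquiv.norm_map]
  rw [this]; exact hy

lemma hasGradientAt_inner_self (ξ : Euc n) :
    HasGradientAt (fun ζ : Euc n => ⟪ζ, ζ⟫) ((2:ℝ) • ξ) ξ := by
  rw [hasGradientAt_iff_hasFDerivAt]
  have h := (hasFDerivAt_id ξ).inner ℝ (hasFDerivAt_id ξ)
  refine h.congr_fderiv ?_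
  ext v
  simp only [ContinuousLinearMap.coe_comp', Function.comp_apply, fderivInnerCLM_apply,
    ContinuousLinearMap.prod_apply, ContinuousLinearMap.coe_id', id_eq,
    InnerProductSpace.toDual_apply_apply, real_inner_smul_left]
  rw [real_inner_comm v ξ]
  ring

lemma hasGradientAt_inner_const (g ξ : Euc n) :
    HasGradientAt (fun ζ : Euc n => ⟪g, ζ⟫) g ξ := by
  rw [hasGradientAt_iff_hasFDerivAt]
  refine (innerSL ℝ g).hasFDerivAt.congr_fderiv ?_
  ext v
  simp [InnerProductSpace.toDual_apply_apply]

lemma hasGradientAt_grad_inner {f : Euc n → ℝ} {x : Euc n} (hf : ContDiffAt ℝ 2 f x) (ξ : Euc n) :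
    HasGradientAt (fun y => ⟪gradient f y, ξ⟫) (hess f x ξ) x := by
  rw [hasGradientAt_iff_hasFDerivAt]
  have hF : HasFDerivAt (fderiv ℝ f) (fderiv ℝ (fderiv ℝ f) x) x :=
    ((hf.fderiv_right (m := 1) (by norm_num)).differentiableAt (by norm_num)).hasFDerivAt
  have h := (ContinuousLinearMap.apply ℝ ℝ ξ).hasFDerivAt.comp x hF
  have heq : (fun y => ⟪gradient f y, ξ⟫) = fun y => (ContinuousLinearMap.apply ℝ ℝ ξ) (fderiv ℝ f y) := by
    funext y; exact inner_grad f y ξ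
  rw [heq]
  refine h.congr_fderiv ?_
  ext v
  simp only [ContinuousLinearMap.coe_comp', Function.comp_apply,
    ContinuousLinearMap.apply_apply, InnerProductSpace.toDual_apply_apply]
  rw [← inner_hess, hess_symm hf, inner_hess]

lemma hasGradientAt_grad_sq {f : Euc n → ℝ} {x : Euc n} (hf : ContDiffAt ℝ 2 f x) :
    HasGradientAt (fun y => ⟪gradient f y, gradient f y⟫)
      ((2:ℝ) • hess f x (gradient f x)) x := by
  rw [hasGradientAt_iff_hasFDerivAt]
  have h := (hasFDerivAt_grad hf).inner ℝ (hasFDerivAt_grad hf)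
  refine h.congr_fderiv ?_
  ext v
  simp only [ContinuousLinearMap.coe_comp', Function.comp_apply, fderivInnerCLM_apply,
    ContinuousLinearMap.prod_apply, InnerProductSpace.toDual_apply_apply, RCLike.inner_apply,
    real_inner_smul_left]
  rw [real_inner_comm (hess f x v) (gradient f x), hess_symm hf v (gradient f x)]
  ring

lemma grad_symA_ξ (φ : Euc n → ℝ) (x ξ : Euc n) :
    gradient (symA φ x) ξ = (2:ℝ) • ξ := by
  refine HasGradientAt.gradient ?_
  exact hasGradientAt_iff_hasFDerivAt.2
    ((hasGradientAt_iff_hasFDerivAt.1 (hasGradientAt_inner_self ξ)).sub_const _)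

lemma grad_symB_ξ (φ : Euc n → ℝ) (x ξ : Euc n) :
    gradient (symB φ x) ξ = (2:ℝ) • gradient φ x := by
  refine HasGradientAt.gradient ?_
  rw [hasGradientAt_iff_hasFDerivAt]
  have h := (hasGradientAt_iff_hasFDerivAt.1
    (hasGradientAt_inner_const (gradient φ x) ξ)).const_mul (2:ℝ)
  exact h.congr_fderiv (map_smul _ _ _).symm

lemma grad_symA_x {φ : Euc n → ℝ} {x : Euc n} (hf : ContDiffAt ℝ 2 φ x) (ξ : Euc n) :
    gradient (fun y => symA φ y ξ) x = -((2:ℝ) • hess φ x (gradient φ x)) := by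
  refine HasGradientAt.gradient ?_
  rw [hasGradientAt_iff_hasFDerivAt]
  have h := (hasGradientAt_iff_hasFDerivAt.1 (hasGradientAt_grad_sq hf)).const_sub ⟪ξ, ξ⟫
  exact h.congr_fderiv (map_neg _ _).symm

lemma grad_symB_x {φ : Euc n → ℝ} {x : Euc n} (hf : ContDiffAt ℝ 2 φ x) (ξ : Euc n) :
    gradient (fun y => symB φ y ξ) x = (2:ℝ) • hess φ x ξ := by
  refine HasGradientAt.gradient ?_
  rw [hasGradientAt_iff_hasFDerivAt]
  have h := (hasGradientAt_iff_hasFDerivAt.1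
    (hasGradientAt_grad_inner hf ξ)).const_mul (2:ℝ)
  exact h.congr_fderiv (map_smul _ _ _).symm

lemma poisson_eq {φ : Euc n → ℝ} {x : Euc n} (hf : ContDiffAt ℝ 2 φ x) (ξ : Euc n) :
    poisson (symA φ) (symB φ) x ξ
      = 4 * ⟪hess φ x ξ, ξ⟫ + 4 * ⟪hess φ x (gradient φ x), gradient φ x⟫ := by
  rw [poisson, grad_symA_ξ, grad_symB_ξ, grad_symA_x hf, grad_symB_x hf]
  rw [real_inner_smul_left, real_inner_smul_right, inner_neg_left, real_inner_smul_left,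
    real_inner_smul_right]
  rw [real_inner_comm ξ (hess φ x ξ)]
  ring

noncomputable def kfun (φ : Euc n → ℝ) (x : Euc n) : ℝ :=
  2 * ⟪hess φ x (gradient φ x), gradient φ x⟫ / ⟪gradient φ x, gradient φ x⟫

lemma key_deriv {φ ψ : Euc n → ℝ} {x : Euc n}
    (hφ : ContDiffAt ℝ 2 φ x) (hψ : ContDiffAt ℝ 2 ψ x)
    (htr : ∀ᶠ y in nhds x, ⟪gradient φ y, gradient ψ y⟫ = 0)
    (hg : gradient φ x ≠ 0)
    (hLCW : ∀ ξ, symA φ x ξ = 0 → symB φ x ξ = 0 → poisson (symA φ) (symB φ) x ξ = 0) :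
    ∃ L : Euc n →L[ℝ] ℝ,
      HasFDerivAt (fun y => ⟪gradient ψ y, gradient ψ y⟫ - ⟪gradient φ y, gradient φ y⟫) L x ∧
      L (gradient φ x) = kfun φ x *
        (⟪gradient ψ x, gradient ψ x⟫ - ⟪gradient φ x, gradient φ x⟫) := by
  set gφ := gradient φ x with hgφ
  set gψ := gradient ψ x with hgψ
  have hFψ := hasGradientAt_iff_hasFDerivAt.1 (hasGradientAt_grad_sq hψ)
  have hFφ := hasGradientAt_iff_hasFDerivAt.1 (hasGradientAt_grad_sq hφ)
  refine ⟨_, hFψ.sub hFφ, ?_⟩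
  -- transport derivative
  have hM : HasFDerivAt (fun y => ⟪gradient φ y, gradient ψ y⟫)
      ((fderivInnerCLM ℝ (gφ, gψ)).comp ((hess φ x).prod (hess ψ x))) x :=
    (hasFDerivAt_grad hφ).inner ℝ (hasFDerivAt_grad hψ)
  have h0 : HasFDerivAt (fun y => ⟪gradient φ y, gradient ψ y⟫)
      (0 : Euc n →L[ℝ] ℝ) x :=
    (hasFDerivAt_const (0:ℝ) x).congr_of_eventuallyEq htr
  have hMeq := hM.unique h0
  have htr0 : ⟪gφ, gψ⟫ = (0:ℝ) := htr.self_of_nhds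
  have hMv : ∀ v : Euc n, ⟪gφ, hess ψ x v⟫ + ⟪hess φ x v, gψ⟫ = 0 := by
    intro v
    have := congrFun (congrArg (fun (L : Euc n →L[ℝ] ℝ) => (L : Euc n → ℝ)) hMeq) v
    simpa [fderivInnerCLM_apply] using this
  -- value of the derivative on gφ
  have hval : (InnerProductSpace.toDual ℝ (Euc n)
        ((2:ℝ) • hess ψ x gψ)) gφ - (InnerProductSpace.toDual ℝ (Euc n) ((2:ℝ) • hess φ x gφ)) gφ
      = 2 * ⟪hess ψ x gψ, gφ⟫ - 2 * ⟪hess φ x gφ, gφ⟫ := by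
    simp only [InnerProductSpace.toDual_apply_apply, real_inner_smul_left]
  rw [ContinuousLinearMap.sub_apply, hval]
  -- the cross term
  have hcross : ⟪hess ψ x gψ, gφ⟫ = -⟪hess φ x gψ, gψ⟫ := by
    have h1 := hMv gψ
    rw [real_inner_comm]
    linarith
  set Qφ := ⟪hess φ x gφ, gφ⟫ with hQφ
  set Qψ := ⟪hess φ x gψ, gψ⟫ with hQψ
  set p := ⟪gφ, gφ⟫ with hp
  set s := ⟪gψ, gψ⟫ with hs
  have hppos : 0 < p := by
    rw [hp, real_inner_self_eq_norm_sq]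
    exact pow_pos (norm_pos_iff.mpr hg) 2
  have hQψ_eq : Qψ * p = -Qφ * s := by
    rcases eq_or_ne gψ 0 with h0ψ | h0ψ
    · have e1 : Qψ = 0 := by rw [hQψ, h0ψ]; simp
      have e2 : s = 0 := by rw [hs, h0ψ]; simp
      rw [e1, e2]; ring
    · have hspos : 0 < s := by
        rw [hs, real_inner_self_eq_norm_sq]
        exact pow_pos (norm_pos_iff.mpr h0ψ) 2
      set t := Real.sqrt (p / s) with ht
      have ht2' : t ^ 2 * s = p := by
        rw [ht, Real.sq_sqrt (by positivity)]
        field_simp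
      have hA : symA φ x (t • gψ) = 0 := by
        rw [symA, real_inner_smul_left, real_inner_smul_right, ← hgφ, ← hp, ← hs]
        linear_combination ht2'
      have hB : symB φ x (t • gψ) = 0 := by
        rw [symB, real_inner_smul_right, ← hgφ, htr0]
        ring
      have hP := hLCW (t • gψ) hA hB
      rw [poisson_eq hφ (t • gψ), map_smul, real_inner_smul_left, real_inner_smul_right,
        ← hgφ, ← hQφ, ← hQψ] at hP
      linear_combination s * hP / 4 - Qψ * ht2'
  rw [hcross, kfun, ← hgφ, ← hQφ, ← hp, div_mul_eq_mul_div, eq_div_iff hppos.ne']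
  linear_combination (-2 : ℝ) * hQψ_eq

lemma gronwall_aux {h k : ℝ → ℝ} {a b K : ℝ} (hab : a ≤ b)
    (hd : ∀ t ∈ Set.Icc a b, HasDerivAt h (k t * h t) t)
    (hbd : ∀ t ∈ Set.Icc a b, |k t| ≤ K)
    (h0 : h a = 0) : h b = 0 := by
  have hcont : ContinuousOn h (Set.Icc a b) := fun t ht =>
    (hd t ht).continuousAt.continuousWithinAt
  have hG := norm_le_gronwallBound_of_norm_deriv_right_le (f := h) (f' := fun t => k t * h t)
    (δ := 0) (K := K) (ε := 0) (a := a) (b := b) hcont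
    (fun t ht => (hd t (Set.Ico_subset_Icc_self ht)).hasDerivWithinAt)
    (by simp [h0])
    (fun t ht => by
      have h2 := hbd t (Set.Ico_subset_Icc_self ht)
      have h1 : ‖k t * h t‖ = |k t| * ‖h t‖ := by
        rw [Real.norm_eq_abs, abs_mul, Real.norm_eq_abs]
      rw [h1]
      have h3 : |k t| * ‖h t‖ ≤ K * ‖h t‖ := mul_le_mul_of_nonneg_right h2 (norm_nonneg _)
      linarith)
  have hb2 := hG b (Set.right_mem_Icc.2 hab)
  rw [gronwallBound_ε0_δ0] at hb2
  exact norm_le_zero_iff.1 hb2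

lemma gronwall_zero {h k : ℝ → ℝ} {a b K : ℝ}
    (hd : ∀ t ∈ Set.uIcc a b, HasDerivAt h (k t * h t) t)
    (hbd : ∀ t ∈ Set.uIcc a b, |k t| ≤ K)
    (h0 : h b = 0) : h a = 0 := by
  rcases le_total b a with hba | hab
  · rw [Set.uIcc_comm, Set.uIcc_of_le hba] at hd hbd
    exact gronwall_aux hba hd hbd h0
  · rw [Set.uIcc_of_le hab] at hd hbd
    have key : ∀ t ∈ Set.Icc a b, a + b - t ∈ Set.Icc a b := by
      intro t ht; constructor <;> [linarith [ht.2]; linarith [ht.1]]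
    have hd' : ∀ t ∈ Set.Icc a b,
        HasDerivAt (fun s => h (a + b - s)) ((-(k (a + b - t))) * h (a + b - t)) t := by
      intro t ht
      have hg : HasDerivAt (fun s : ℝ => a + b - s) (-1) t := by
        simpa using (hasDerivAt_id t).const_sub (a + b)
      have := (hd (a + b - t) (key t ht)).comp t hg
      exact this.congr_deriv (by ring)
    have h0' : h (a + b - a) = 0 := by
      rw [show a + b - a = b by ring]; exact h0
    have := gronwall_aux (h := fun s => h (a + b - s)) (k := fun s => -(k (a + b - s))) hab
      hd' (fun t ht => by rw [abs_neg]; exact hbd _ (key t ht)) h0'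
    simp only [show a + b - b = a by ring] at this
    exact this

lemma kfun_eq (φ : Euc n → ℝ) (x : Euc n) :
    kfun φ x = 2 * (fderiv ℝ (fderiv ℝ φ) x (gradient φ x)) (gradient φ x)
      / ⟪gradient φ x, gradient φ x⟫ := by
  rw [kfun, inner_hess]

lemma kfun_contOn {Ω : Set (Euc n)} (hΩ : IsOpen Ω) {φ : Euc n → ℝ}
    (hφ : ContDiffOn ℝ (⊤ : ℕ∞) φ Ω) (hgrad : ∀ x ∈ Ω, gradient φ x ≠ 0) :
    ContinuousOn (kfun φ) Ω := by
  have c1 : ContinuousOn (fderiv ℝ φ) Ω :=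
    hφ.continuousOn_fderiv_of_isOpen hΩ (by exact_mod_cast le_top)
  have cg : ContinuousOn (gradient φ) Ω := by
    have : gradient φ = fun y => (InnerProductSpace.toDual ℝ (Euc n)).symm (fderiv ℝ φ y) := rfl
    rw [this]
    exact (InnerProductSpace.toDual ℝ (Euc n)).symm.continuous.comp_continuousOn c1
  have c2 : ContinuousOn (fderiv ℝ (fderiv ℝ φ)) Ω :=
    (hφ.fderiv_of_isOpen hΩ (m := 2) (WithTop.coe_le_coe.2 le_top)).continuousOn_fderiv_of_isOpen hΩ (by norm_num)
  have cnum : ContinuousOn (fun y => (fderiv ℝ (fderiv ℝ φ) y (gradient φ y)) (gradient φ y)) Ω :=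
    (c2.clm_apply cg).clm_apply cg
  have cden : ContinuousOn (fun y => ⟪gradient φ y, gradient φ y⟫) Ω := cg.inner cg
  have : ContinuousOn (fun y =>
      2 * (fderiv ℝ (fderiv ℝ φ) y (gradient φ y)) (gradient φ y)
        / ⟪gradient φ y, gradient φ y⟫) Ω := by
    refine ContinuousOn.div (continuousOn_const.mul cnum) cden ?_
    intro y hy
    rw [real_inner_self_eq_norm_sq]
    exact pow_ne_zero 2 (norm_ne_zero_iff.2 (hgrad y hy))
  exact this.congr fun y _ => kfun_eq φ y


/-- if `ψ` satisfies the transport equation `φ'·∂ψ = 0` on `Ω`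
and the eikonal equation `|ψ'|² = |φ'|²` on the level set `G = φ⁻¹(C₀)`, and
`Ω` is a union of integral segments of `φ'·∂_x` crossing `G`, then
`|ψ'|² = |φ'|²` throughout `Ω`, i.e. `ψ` solves the full eikonal system. -/
theorem stmt12 {n : ℕ} (hn : 2 ≤ n)
    (Ω : Set (Euc n)) (hΩ : IsOpen Ω)
    (φ : Euc n → ℝ) (hφ : ContDiffOn ℝ (⊤ : ℕ∞) φ Ω)
    (hgrad : ∀ x ∈ Ω, gradient φ x ≠ 0)
    (hLCW : ∀ x ∈ Ω, ∀ ξ, symA φ x ξ = 0 → symB φ x ξ = 0 →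
      poisson (symA φ) (symB φ) x ξ = 0)
    (ψ : Euc n → ℝ) (hψ : ContDiffOn ℝ (⊤ : ℕ∞) ψ Ω)
    (C₀ : ℝ)
    (htransport : ∀ x ∈ Ω, ⟪gradient φ x, gradient ψ x⟫ = 0)
    (heikG : ∀ x ∈ Ω, φ x = C₀ →
      ⟪gradient ψ x, gradient ψ x⟫ = ⟪gradient φ x, gradient φ x⟫)
    (hflow : ∀ x ∈ Ω, ∃ γ : ℝ → Euc n, ∃ t₀ t₁ : ℝ,
      γ t₀ = x ∧ φ (γ t₁) = C₀ ∧
      ∀ t ∈ Set.uIcc t₀ t₁, γ t ∈ Ω ∧ HasDerivAt γ (gradient φ (γ t)) t) :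
    ∀ x ∈ Ω, ⟪gradient ψ x, gradient ψ x⟫ = ⟪gradient φ x, gradient φ x⟫ := by
  intro x hx
  obtain ⟨γ, t₀, t₁, hγ0, hγ1, hseg⟩ := hflow x hx
  set F : Euc n → ℝ :=
    fun y => ⟪gradient ψ y, gradient ψ y⟫ - ⟪gradient φ y, gradient φ y⟫ with hF
  have hmem : ∀ t ∈ Set.uIcc t₀ t₁, γ t ∈ Ω := fun t ht => (hseg t ht).1
  have hd : ∀ t ∈ Set.uIcc t₀ t₁,
      HasDerivAt (fun s => F (γ s)) (kfun φ (γ t) * F (γ t)) t := by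
    intro t ht
    have hxt := hmem t ht
    have hφt : ContDiffAt ℝ 2 φ (γ t) := (hφ.contDiffAt (hΩ.mem_nhds hxt)).of_le (WithTop.coe_le_coe.2 le_top)
    have hψt : ContDiffAt ℝ 2 ψ (γ t) := (hψ.contDiffAt (hΩ.mem_nhds hxt)).of_le (WithTop.coe_le_coe.2 le_top)
    have htr : ∀ᶠ y in nhds (γ t), ⟪gradient φ y, gradient ψ y⟫ = 0 := by
      filter_upwards [hΩ.mem_nhds hxt] with y hy using htransport y hy
    obtain ⟨L, hL, hLval⟩ := key_deriv hφt hψt htr (hgrad _ hxt) (hLCW _ hxt)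
    have hcomp := hL.comp_hasDerivAt t (hseg t ht).2
    rw [hLval] at hcomp
    exact hcomp
  obtain ⟨K, hK⟩ := (isCompact_uIcc).exists_bound_of_continuousOn
    ((kfun_contOn hΩ hφ hgrad).comp
      (fun t ht => (hseg t ht).2.continuousAt.continuousWithinAt) hmem)
  have h1 : F (γ t₁) = 0 := by
    have := heikG (γ t₁) (hmem t₁ Set.right_mem_uIcc) hγ1
    rw [hF]; simp only [this, sub_self]
  have h0 : F (γ t₀) = 0 :=
    gronwall_zero (h := fun s => F (γ s)) (k := fun t => kfun φ (γ t)) (K := K) hd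
      (fun t ht => by rw [← Real.norm_eq_abs]; exact hK t ht) h1
  rw [hγ0] at h0
  have h0' : ⟪gradient ψ x, gradient ψ x⟫ - ⟪gradient φ x, gradient φ x⟫ = 0 := h0
  linarith
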